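/- For all real x, y and all nonnegative integers n, m, the 6-term recurrence (m+1)·L_{n+1,m+1}(x,y) = (2m+1-y)·L_{n+1,m}(x,y) + 2(m+1)·L_{n,m+1}(x,y) - m·L_{n+1,m-1}(x,y) - (2m+1+x-y)·L_{n,m}(x,y) - (m+1)·L_{n-1,m+1}(x,y) holds, where L_{a,b}(x,y) := 0 whenever a < 0 or b < 0. -/

import Mathlib

noncomputable def L2 (n m : ℕ) (x y : ℝ) : ℝ :=
  ∑ i ∈ Finset.range (m+1), ∑ s ∈ Finset.range (n+1),
    ((-1:ℝ)^(i+s) / ((Nat.factorial i) * (Nat.factorial s))) *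
      ((m+n).choose (m-i)) * ((n+i).choose (n-s)) * x^s * y^i

noncomputable def L2Z (n m : ℤ) (x y : ℝ) : ℝ :=
  if n < 0 ∨ m < 0 then 0 else L2 n.toNat m.toNat x y
/-!
Up to the factor `(n+m)!`, the coefficient of `(-x)^s (-y)^i` in `L_{n,m}` is
`1 / (s! i! (m-i)! (n-s)! (s+i)!)`. Reading `1/k!` as `0` for `k < 0` makes this formula valid for
all integers `n, m, s, i`, including the cases `L_{a,b} = 0` for negative `a` or `b`, and it turns
multiplication by `x` or `y` into a shift of the coefficients. So every term of the recurrence is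
a sum of the same shape over one common box of exponents, and the recurrence holds coefficient by
coefficient, where it is a polynomial identity once `1/(k-1)! = k/k!` is used.
-/

open Finset
open scoped Nat

section InvFact

variable {K : Type*} [Field K]

def invFact (k : ℤ) : K := if k < 0 then 0 else ((k.toNat)! : K)⁻¹

theorem invFact_of_neg {k : ℤ} (hk : k < 0) : invFact k = (0 : K) := if_pos hk

theorem invFact_natCast (k : ℕ) : invFact (k : ℤ) = ((k ! : ℕ) : K)⁻¹ := by
  simp [invFact]

theorem invFact_sub_one [CharZero K] (k : ℤ) : invFact (k - 1) = (k : K) * invFact k := by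
  rcases lt_or_ge k 1 with hk | hk
  · rw [invFact_of_neg (by omega)]
    rcases (show k ≤ 0 by omega).lt_or_eq with hk | rfl
    · rw [invFact_of_neg hk, mul_zero]
    · simp
  · obtain ⟨j, rfl⟩ : ∃ j : ℕ, k = j + 1 := ⟨k.toNat - 1, by omega⟩
    rw [add_sub_cancel_right, show (j : ℤ) + 1 = ((j + 1 : ℕ) : ℤ) by push_cast; ring,
      invFact_natCast, invFact_natCast, Nat.factorial_succ]
    push_cast
    field_simp

end InvFact

section BoxSum

variable {R : Type*} [CommSemiring R]

def boxSum (N M : ℕ) (x y : R) : (ℤ → ℤ → R) →ₗ[R] R where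
  toFun f := ∑ i ∈ range M, ∑ s ∈ range N, f s i * x ^ s * y ^ i
  map_add' f g := by simp only [Pi.add_apply, add_mul, sum_add_distrib]
  map_smul' c f := by simp only [Pi.smul_apply, smul_eq_mul, mul_sum, mul_assoc, RingHom.id_apply]

theorem boxSum_apply (N M : ℕ) (x y : R) (f : ℤ → ℤ → R) :
    boxSum N M x y f = ∑ i ∈ range M, ∑ s ∈ range N, f s i * x ^ s * y ^ i := rfl

theorem boxSum_eq_of_le {N M N' M' : ℕ} (hN : N ≤ N') (hM : M ≤ M') {f : ℤ → ℤ → R}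
    (hfN : ∀ s i : ℕ, N ≤ s → f s i = 0) (hfM : ∀ s i : ℕ, M ≤ i → f s i = 0) (x y : R) :
    boxSum N' M' x y f = boxSum N M x y f := by
  simp only [boxSum_apply]
  refine (sum_subset (range_subset_range.2 hM) fun i _ hi => sum_eq_zero fun s _ => ?_).symm.trans
    (sum_congr rfl fun i _ => (sum_subset (range_subset_range.2 hN) fun s _ hs => ?_).symm)
  · rw [hfM s i (by simpa using hi), zero_mul, zero_mul]
  · rw [hfN s i (by simpa using hs), zero_mul, zero_mul]

theorem mul_boxSum_x {f : ℤ → ℤ → R} (hf : ∀ i, f (-1) i = 0) (N M : ℕ) (x y : R) :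
    x * boxSum N M x y f = boxSum (N + 1) M x y fun s i => f (s - 1) i := by
  simp only [boxSum_apply, mul_sum]
  refine sum_congr rfl fun i _ => ?_
  rw [sum_range_succ']
  simp only [Nat.cast_zero, zero_sub, hf, zero_mul, add_zero, Nat.cast_succ, add_sub_cancel_right]
  exact sum_congr rfl fun s _ => by ring

theorem mul_boxSum_y {f : ℤ → ℤ → R} (hf : ∀ s, f s (-1) = 0) (N M : ℕ) (x y : R) :
    y * boxSum N M x y f = boxSum N (M + 1) x y fun s i => f s (i - 1) := by
  simp only [boxSum_apply, mul_sum]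
  rw [sum_range_succ']
  simp only [Nat.cast_zero, zero_sub, hf, zero_mul, sum_const_zero, add_zero, Nat.cast_succ,
    add_sub_cancel_right]
  exact sum_congr rfl fun i _ => sum_congr rfl fun s _ => by ring

end BoxSum

section Coefficients

variable {K : Type*} [Field K]

def L2Coeff (n m s i : ℤ) : K :=
  ((n + m).toNat ! : K) * invFact s * invFact i * invFact (m - i) * invFact (n - s) *
    invFact (s + i)

theorem L2Coeff_eq_zero_of_n_lt {n m s i : ℤ} (h : n < s) : L2Coeff n m s i = (0 : K) := by
  rw [L2Coeff, invFact_of_neg (by omega : n - s < 0), mul_zero, zero_mul]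

theorem L2Coeff_eq_zero_of_m_lt {n m s i : ℤ} (h : m < i) : L2Coeff n m s i = (0 : K) := by
  rw [L2Coeff, invFact_of_neg (by omega : m - i < 0), mul_zero, zero_mul, zero_mul]

theorem L2Coeff_eq_zero_of_s_neg {n m s i : ℤ} (h : s < 0) : L2Coeff n m s i = (0 : K) := by
  simp [L2Coeff, invFact_of_neg h]

theorem L2Coeff_eq_zero_of_i_neg {n m s i : ℤ} (h : i < 0) : L2Coeff n m s i = (0 : K) := by
  simp [L2Coeff, invFact_of_neg h]

theorem L2Coeff_recurrence [CharZero K] (n m : ℕ) :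
    ((m : K) + 1) • L2Coeff (n + 1) (m + 1) =
      (2 * (m : K) + 1) • L2Coeff (n + 1) m + (fun s i => (L2Coeff (n + 1) m s (i - 1) : K))
      + (2 * ((m : K) + 1)) • L2Coeff n (m + 1) - (m : K) • L2Coeff (n + 1) (m - 1)
      - (2 * (m : K) + 1) • L2Coeff n m + (fun s i => (L2Coeff n m (s - 1) i : K))
      - (fun s i => (L2Coeff n m s (i - 1) : K)) - ((m : K) + 1) • L2Coeff (n - 1) (m + 1) := by
  funext s i
  have shift (k j : ℤ) (h : k + 1 = j) : (invFact k : K) = j * invFact j := by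
    rw [← invFact_sub_one, ← h, add_sub_cancel_right]
  simp only [Pi.add_apply, Pi.sub_apply, Pi.smul_apply, smul_eq_mul, L2Coeff]
  rw [shift (m - 1 - i) (m - i) (by ring), shift (m - i) (m + 1 - i) (by ring),
    shift (n - 1 - s) (n - s) (by ring), shift (n - s) (n + 1 - s) (by ring),
    shift (i - 1) i (by ring), shift (s - 1) s (by ring),
    shift (s + (i - 1)) (s + i) (by ring), shift (s - 1 + i) (s + i) (by ring),
    show (m : ℤ) - (i - 1) = m + 1 - i by ring, show (n : ℤ) - (s - 1) = n + 1 - s by ring,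
    show ((n : ℤ) + 1 + (m + 1)).toNat = n + m + 1 + 1 by omega,
    show ((n : ℤ) + 1 + m).toNat = n + m + 1 by omega,
    show ((n : ℤ) + (m + 1)).toNat = n + m + 1 by omega,
    show ((n : ℤ) + 1 + (m - 1)).toNat = n + m by omega,
    show ((n : ℤ) - 1 + (m + 1)).toNat = n + m by omega,
    show ((n : ℤ) + m).toNat = n + m by omega]
  simp only [Nat.factorial_succ]
  push_cast
  ring

end Coefficients

theorem L2_summand_eq {n m s i : ℕ} (hs : s ≤ n) (hi : i ≤ m) (x y : ℝ) :
    ((-1:ℝ)^(i+s) / ((Nat.factorial i) * (Nat.factorial s))) *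
      ((m+n).choose (m-i)) * ((n+i).choose (n-s)) * x^s * y^i
      = (L2Coeff n m s i : ℝ) * (-x) ^ s * (-y) ^ i := by
  have hmi : (m : ℤ) - i = ((m - i : ℕ) : ℤ) := by omega
  have hns : (n : ℤ) - s = ((n - s : ℕ) : ℤ) := by omega
  simp only [L2Coeff, ← Nat.cast_add, hmi, hns, invFact_natCast, Int.toNat_natCast]
  rw [Nat.cast_choose ℝ (by omega : m - i ≤ m + n), Nat.cast_choose ℝ (by omega : n - s ≤ n + i),
    show m + n - (m - i) = n + i by omega, show n + i - (n - s) = s + i by omega,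
    neg_pow x, neg_pow y, pow_add, add_comm n m]
  field_simp

theorem L2_eq_boxSum (n m : ℕ) (x y : ℝ) :
    L2 n m x y = boxSum (n + 1) (m + 1) (-x) (-y) (L2Coeff n m) :=
  sum_congr rfl fun i hi => sum_congr rfl fun s hs =>
    L2_summand_eq (by simpa [Nat.lt_succ_iff] using hs) (by simpa [Nat.lt_succ_iff] using hi) x y

theorem L2Z_eq_boxSum (n m : ℤ) (N M : ℕ) (hn : n < N) (hm : m < M) (x y : ℝ) :
    L2Z n m x y = boxSum N M (-x) (-y) (L2Coeff n m) := by
  have vanish_x {N₀ : ℕ} (h : n < N₀) (s i : ℕ) (hs : N₀ ≤ s) : (L2Coeff n m s i : ℝ) = 0 :=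
    L2Coeff_eq_zero_of_n_lt (by omega)
  have vanish_y {M₀ : ℕ} (h : m < M₀) (s i : ℕ) (hi : M₀ ≤ i) : (L2Coeff n m s i : ℝ) = 0 :=
    L2Coeff_eq_zero_of_m_lt (by omega)
  rw [L2Z]
  split_ifs with hneg
  · obtain hn' | hm' := hneg
    · rw [boxSum_eq_of_le (Nat.zero_le N) le_rfl (vanish_x (by omega)) (vanish_y hm)]
      simp [boxSum_apply]
    · rw [boxSum_eq_of_le le_rfl (Nat.zero_le M) (vanish_x hn) (vanish_y (by omega))]
      simp [boxSum_apply]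
  · push Not at hneg
    lift n to ℕ using hneg.1
    lift m to ℕ using hneg.2
    rw [Int.toNat_natCast, Int.toNat_natCast, L2_eq_boxSum]
    exact (boxSum_eq_of_le (show n + 1 ≤ N by omega) (show m + 1 ≤ M by omega)
      (vanish_x (by omega)) (vanish_y (by omega)) _ _).symm

theorem stmt6 (x y : ℝ) (n m : ℕ) :
    ((m:ℝ)+1) * L2Z (n+1) (m+1) x y =
      (2*(m:ℝ)+1-y) * L2Z (n+1) m x y + 2*((m:ℝ)+1) * L2Z n (m+1) x y
      - (m:ℝ) * L2Z (n+1) ((m:ℤ)-1) x y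
      - (2*(m:ℝ)+1+x-y) * L2Z n m x y - ((m:ℝ)+1) * L2Z ((n:ℤ)-1) (m+1) x y := by
  have expand (a b : ℤ) (ha : a < n + 2) (hb : b < m + 2) :
      boxSum (n + 2) (m + 2) (-x) (-y) (L2Coeff a b) = L2Z a b x y :=
    (L2Z_eq_boxSum a b _ _ (by exact_mod_cast ha) (by exact_mod_cast hb) x y).symm
  have expand_x : boxSum (n + 2) (m + 2) (-x) (-y) (fun s i => L2Coeff n m (s - 1) i)
      = -x * L2Z n m x y := by
    rw [L2Z_eq_boxSum n m (n + 1) (m + 2) (by omega) (by omega),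
      mul_boxSum_x fun _ => L2Coeff_eq_zero_of_s_neg (by norm_num)]
  have expand_y (a : ℤ) (ha : a < n + 2) :
      boxSum (n + 2) (m + 2) (-x) (-y) (fun s i => L2Coeff a m s (i - 1)) = -y * L2Z a m x y := by
    rw [L2Z_eq_boxSum a m (n + 2) (m + 1) (by exact_mod_cast ha) (by omega),
      mul_boxSum_y fun _ => L2Coeff_eq_zero_of_i_neg (by norm_num)]
  have key := congrArg (boxSum (n + 2) (m + 2) (-x) (-y)) (L2Coeff_recurrence n m)
  simp only [map_add, map_sub, map_smul, smul_eq_mul] at key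
  rw [expand_x, expand_y _ (by omega), expand_y _ (by omega), expand _ _ (by omega) (by omega),
    expand _ _ (by omega) (by omega), expand _ _ (by omega) (by omega),
    expand _ _ (by omega) (by omega), expand _ _ (by omega) (by omega),
    expand _ _ (by omega) (by omega)] at key
  linear_combination key
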